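/- arXiv:0906.1477 — 4 statements merged into one kernel-verified Lean document; each statement's English description precedes it below -/
import Mathlib

section
/- The functional J(w) = ∫₀¹(φ(w) + ½ν²|w'|²)dx on A = {w ∈ H¹(0,1) : w(0) = d} attains its infimum: there exists w̄ ∈ A with J(w̄) = inf_A J. -/
/-!
Identify an admissible `w` with its derivative `G ∈ L²(0,1)`, so that `w x = d + ⟪G, 1_{(0,x)}⟫`,
and let `G` range over the dual of `L²(0,1)` with its weak-* topology. The energy becomes
`Φ(G) + ν²/2 ‖G‖²`. On a norm ball the `w` are uniformly bounded and converge pointwise when `G`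
converges, so `Φ` is continuous there by dominated convergence; the norm is weak-* lower
semicontinuous. Since `φ ≥ 0`, the penalty confines the infimum to a ball, which is weak-* compact
by Banach–Alaoglu, so the energy attains its minimum there.
-/

open MeasureTheory Filter Topology Set
open scoped InnerProductSpace NNReal ENNReal symmDiff

namespace WeakDual

section

variable {𝕜 E : Type*} [RCLike 𝕜] [NormedAddCommGroup E] [NormedSpace 𝕜 E]

theorem lowerSemicontinuous_nnnorm_toStrongDual :
    LowerSemicontinuous fun ℓ : WeakDual 𝕜 E => ‖toStrongDual ℓ‖₊ := by
  intro ℓ₀ r hr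
  obtain ⟨u, hu, hru⟩ := (toStrongDual ℓ₀).exists_lt_apply_of_lt_opNNNorm hr
  have hopen : IsOpen {ℓ : WeakDual 𝕜 E | r < ‖ℓ u‖₊} :=
    isOpen_lt continuous_const (continuous_nnnorm.comp (eval_continuous u))
  filter_upwards [hopen.mem_nhds hru] with ℓ hℓ
  calc r < ‖ℓ u‖₊ := hℓ
    _ ≤ ‖toStrongDual ℓ‖₊ * ‖u‖₊ := (toStrongDual ℓ).le_opNNNorm u
    _ ≤ ‖toStrongDual ℓ‖₊ := mul_le_of_le_one_right' hu.le

end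

section

variable {E : Type*} [NormedAddCommGroup E] [NormedSpace ℝ E]

theorem continuousOn_integral_comp_apply [TopologicalSpace.SeparableSpace E]
    {α : Type*} [MeasurableSpace α] {μ : Measure α} [IsFiniteMeasure μ]
    {u : α → E} (hu : AEStronglyMeasurable u μ) {C : ℝ} (hC : ∀ a, ‖u a‖ ≤ C)
    {ψ : ℝ → ℝ} (hψ : Continuous ψ) (R : ℝ) :
    ContinuousOn (fun ℓ : WeakDual ℝ E => ∫ a, ψ (ℓ (u a)) ∂μ)
      (toStrongDual ⁻¹' Metric.closedBall 0 R) := by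
  -- weak-* neighbourhoods are not countably generated, but the ball is compact and metrizable,
  -- so dominated convergence applies on it
  set K := toStrongDual ⁻¹' Metric.closedBall (0 : StrongDual ℝ E) R
  have := metrizable_of_isCompact ℝ E K (isCompact_closedBall 0 R)
  obtain ⟨M, hM⟩ := (isCompact_Icc (a := -(R * C)) (b := R * C)).exists_bound_of_continuousOn
    hψ.continuousOn
  rw [continuousOn_iff_continuous_domRestrict]
  refine continuous_of_dominated (bound := fun _ => M) (fun ℓ => ?_) (fun ℓ => ?_)
    (integrable_const M) (ae_of_all _ fun a => ?_)
  · exact hψ.comp_aestronglyMeasurable ((toStrongDual ℓ.1).continuous.comp_aestronglyMeasurable hu)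
  · refine ae_of_all _ fun a => hM _ (abs_le.1 ?_)
    have hℓ : ‖toStrongDual ℓ.1‖ ≤ R := mem_closedBall_zero_iff.1 ℓ.2
    exact (toStrongDual ℓ.1).le_of_opNorm_le_of_le hℓ (hC a)
  · exact hψ.comp ((eval_continuous (u a)).comp continuous_subtype_val)

theorem exists_forall_le_add_mul_norm_sq {Φ : WeakDual ℝ E → ℝ} {m c : ℝ} (hc : 0 < c)
    (hm : ∀ ℓ, m ≤ Φ ℓ) (hΦ : ∀ R, ContinuousOn Φ (toStrongDual ⁻¹' Metric.closedBall 0 R)) :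
    ∃ ℓ₀, ∀ ℓ, Φ ℓ₀ + c * ‖toStrongDual ℓ₀‖ ^ 2 ≤ Φ ℓ + c * ‖toStrongDual ℓ‖ ^ 2 := by
  -- outside this ball the penalty alone exceeds `Φ 0 - m`
  set R := Real.sqrt ((Φ 0 - m) / c)
  set K := toStrongDual ⁻¹' Metric.closedBall (0 : StrongDual ℝ E) R
  -- `t ↦ c * t ^ 2` is monotone on `ℝ≥0`, hence preserves lower semicontinuity
  have hsq : LowerSemicontinuous fun ℓ : WeakDual ℝ E => c * ‖toStrongDual ℓ‖ ^ 2 :=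
    (show Continuous fun t : ℝ≥0 => c * (t : ℝ) ^ 2 by fun_prop).comp_lowerSemicontinuous
      lowerSemicontinuous_nnnorm_toStrongDual fun a b hab => by dsimp only; gcongr
  obtain ⟨ℓ₀, -, hℓ₀⟩ :=
    ((hΦ R).lowerSemicontinuousOn.add (hsq.lowerSemicontinuousOn _)).exists_isMinOn
      ⟨0, by simp [R]⟩ (isCompact_closedBall 0 R)
  refine ⟨ℓ₀, fun ℓ => ?_⟩
  by_cases hℓ : ℓ ∈ K
  · exact hℓ₀ hℓ
  · have hR : R < ‖toStrongDual ℓ‖ := by simpa [K] using hℓ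
    have : Φ 0 - m < c * ‖toStrongDual ℓ‖ ^ 2 := by
      rw [← div_lt_iff₀' hc, ← Real.sqrt_lt' (hR.trans_le' (Real.sqrt_nonneg _))]
      exact hR
    calc Φ ℓ₀ + c * ‖toStrongDual ℓ₀‖ ^ 2 ≤ Φ 0 + c * ‖toStrongDual 0‖ ^ 2 := hℓ₀ (by simp [R])
      _ ≤ Φ ℓ + c * ‖toStrongDual ℓ‖ ^ 2 := by simp only [map_zero, norm_zero]; linarith [hm ℓ]

end

end WeakDual

section UnitInterval

local notation "μ₀₁" => volume.restrict (Ioo (0:ℝ) 1)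

instance : IsProbabilityMeasure μ₀₁ := ⟨by simp⟩

/-- For `x ∈ [0, 1]`, `⟪G, indicatorIio x⟫ = ∫₀ˣ G`; thus `H¹(0,1)` is modelled by
`x ↦ d + ⟪G, indicatorIio x⟫` with `G ∈ L²(0,1)` the weak derivative. -/
noncomputable def indicatorIio (x : ℝ) : Lp ℝ 2 μ₀₁ :=
  indicatorConstLp 2 (measurableSet_Iio (a := x)) (measure_ne_top _ _) 1

theorem norm_indicatorIio_le (x : ℝ) : ‖indicatorIio x‖ ≤ 1 := by
  refine norm_indicatorConstLp_le.trans ?_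
  rw [norm_one, one_mul]
  exact Real.rpow_le_one measureReal_nonneg measureReal_le_one (by norm_num)

theorem continuous_indicatorIio : Continuous indicatorIio := by
  refine continuous_indicatorConstLp_set (by norm_num) fun x => ?_
  have hle : ∀ y, μ₀₁ (Iio y ∆ Iio x) ≤ ENNReal.ofReal |y - x| := fun y => by
    rw [← Real.volume_interval]
    refine (Measure.restrict_apply_le _ _).trans (measure_mono ?_)
    rintro t (⟨ht, ht'⟩ | ⟨ht, ht'⟩) <;> simp_all [mem_uIcc, le_of_lt]
  have hlim : Tendsto (fun y => ENNReal.ofReal |y - x|) (𝓝 x) (𝓝 0) :=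
    (ENNReal.continuous_ofReal.comp (continuous_sub_right x).abs).tendsto' x 0 (by simp)
  exact tendsto_of_tendsto_of_tendsto_of_le_of_le tendsto_const_nhds hlim (fun _ => zero_le) hle

theorem intervalIntegral_eq_inner_indicatorIio {h : ℝ → ℝ} (hh : MemLp h 2 μ₀₁) {x : ℝ}
    (hx : x ∈ Icc (0:ℝ) 1) : ∫ t in 0..x, h t = ⟪hh.toLp h, indicatorIio x⟫_ℝ := by
  rw [real_inner_comm, indicatorIio, L2.inner_indicatorConstLp_one,
    setIntegral_congr_ae measurableSet_Iio (hh.coeFn_toLp.mono fun t ht _ => ht),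
    Measure.restrict_restrict measurableSet_Iio, Iio_inter_Ioo, min_eq_left hx.2,
    intervalIntegral.integral_of_le hx.1, integral_Ioc_eq_integral_Ioo]

theorem setIntegral_sq_eq_norm_toLp_sq {h : ℝ → ℝ} (hh : MemLp h 2 μ₀₁) :
    ∫ x in Ioo (0:ℝ) 1, h x ^ 2 = ‖hh.toLp h‖ ^ 2 := by
  rw [← real_inner_self_eq_norm_sq, L2.inner_def]
  refine integral_congr_ae ?_
  filter_upwards [hh.coeFn_toLp] with x hx
  simp [hx, sq]

theorem setIntegral_add_mul_sq_eq {φ : ℝ → ℝ} (hφ : Continuous φ) {v h : ℝ → ℝ}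
    (hh : MemLp h 2 μ₀₁) (hv : ∀ x ∈ Icc (0:ℝ) 1, v x = v 0 + ∫ t in 0..x, h t) (c : ℝ) :
    ∫ x in Ioo (0:ℝ) 1, (φ (v x) + c * h x ^ 2) =
      (∫ x in Ioo (0:ℝ) 1, φ (v 0 + ⟪hh.toLp h, indicatorIio x⟫_ℝ)) + c * ‖hh.toLp h‖ ^ 2 := by
  have hφv : EqOn (fun x => φ (v x) + c * h x ^ 2)
      (fun x => φ (v 0 + ⟪hh.toLp h, indicatorIio x⟫_ℝ) + c * h x ^ 2) (Ioo 0 1) := fun x hx => by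
    simp only [hv x (Ioo_subset_Icc_self hx),
      intervalIntegral_eq_inner_indicatorIio hh (Ioo_subset_Icc_self hx)]
  have hint : Integrable (fun x => φ (v 0 + ⟪hh.toLp h, indicatorIio x⟫_ℝ)) μ₀₁ :=
    (Continuous.integrableOn_Icc (hφ.comp (continuous_const.add
      (continuous_const.inner continuous_indicatorIio)))).mono_set Ioo_subset_Icc_self
  rw [setIntegral_congr_fun measurableSet_Ioo hφv,
    integral_add hint (hh.integrable_sq.const_mul c), MeasureTheory.integral_const_mul,
    setIntegral_sq_eq_norm_toLp_sq hh]

end UnitInterval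

/-- Existence of a minimizer: the functional `J(w) = ∫₀¹ (φ(w) + ½ν²|w'|²)`
on `A = {w ∈ H¹(0,1) : w(0) = d}` attains its infimum. Here an `H¹(0,1)`
function is encoded as a pair `(w, g)` with `g ∈ L²(0,1)` and
`w(x) = w(0) + ∫₀ˣ g` on `[0,1]`, and `φ(s) = ½s²` for `s < 1`, `φ(s) = ½` for
`s ≥ 1`. -/
theorem stmt_12 (ν : ℝ) (hν : 0 < ν) (d : ℝ)
    (φ : ℝ → ℝ) (hφ : ∀ s : ℝ, φ s = if s < 1 then s ^ 2 / 2 else 1 / 2) :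
    ∃ w g : ℝ → ℝ,
      MemLp g 2 (volume.restrict (Set.Ioo (0:ℝ) 1)) ∧
      (∀ x ∈ Set.Icc (0:ℝ) 1, w x = w 0 + ∫ t in (0:ℝ)..x, g t) ∧
      w 0 = d ∧
      ∀ v h : ℝ → ℝ,
        MemLp h 2 (volume.restrict (Set.Ioo (0:ℝ) 1)) →
        (∀ x ∈ Set.Icc (0:ℝ) 1, v x = v 0 + ∫ t in (0:ℝ)..x, h t) →
        v 0 = d →
        (∫ x in Set.Ioo (0:ℝ) 1, (φ (w x) + ν ^ 2 / 2 * (g x) ^ 2)) ≤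
          ∫ x in Set.Ioo (0:ℝ) 1, (φ (v x) + ν ^ 2 / 2 * (h x) ^ 2) := by
  obtain rfl : φ = fun s => min s 1 ^ 2 / 2 := funext fun s => by
    rw [hφ]
    split_ifs with hs
    · rw [min_eq_left hs.le]
    · rw [min_eq_right (not_lt.1 hs)]; norm_num
  have hφc : Continuous fun s : ℝ => min s 1 ^ 2 / 2 := by fun_prop
  -- needed for the separability of `L²(0,1)`
  have : Fact ((2 : ℝ≥0∞) ≠ ∞) := ⟨ENNReal.ofNat_ne_top⟩
  obtain ⟨ℓ, hℓ⟩ := WeakDual.exists_forall_le_add_mul_norm_sq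
    (Φ := fun ℓ => ∫ x in Ioo (0:ℝ) 1, min (d + ℓ (indicatorIio x)) 1 ^ 2 / 2)
    (by positivity : 0 < ν ^ 2 / 2) (fun ℓ => integral_nonneg fun x => by positivity)
    (WeakDual.continuousOn_integral_comp_apply continuous_indicatorIio.aestronglyMeasurable
      norm_indicatorIio_le (ψ := fun s => min (d + s) 1 ^ 2 / 2) (by fun_prop))
  obtain ⟨G, rfl⟩ : ∃ G, ℓ = StrongDual.toWeakDual (InnerProductSpace.toDual ℝ _ G) :=
    ⟨(InnerProductSpace.toDual ℝ _).symm (WeakDual.toStrongDual ℓ), by simp⟩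
  refine ⟨fun x => d + ∫ t in 0..x, G t, G, Lp.memLp G, fun x _ => by simp, by simp, ?_⟩
  intro v h hh hv hv0
  rw [setIntegral_add_mul_sq_eq hφc (Lp.memLp G) (fun x _ => by simp),
    setIntegral_add_mul_sq_eq hφc hh hv, hv0, Lp.toLp_coeFn]
  simpa using hℓ (StrongDual.toWeakDual (InnerProductSpace.toDual ℝ _ (hh.toLp h)))
end

section
/- Suppose w ∈ H¹(0,1) with w(0) = d < 1 is a local minimizer (in H¹ norm) of J(w) = ∫₀¹(φ(w) + ½ν²|w'|²)dx with φ(s) = ½s² for s < 1 and ½ for s ≥ 1. Then the set {x : w(x) > 1} is empty. -/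
/-! If `w > 1` somewhere, let `(a, b)` be the component of `{w > 1}` through that point: since
`w 0 = d < 1` we get `w a = 1`, and `w b = 1` unless `b = 1`. Replacing `w'` by `(1 - t) w'` on
`(a, b)` keeps the competitor `≥ 1` there, where `φ` is constant, and changes nothing elsewhere.
So the potential energy is unchanged while the Dirichlet energy drops by
`ν²/2 · t (2 - t) ∫ₐᵇ w'² > 0`, and the competitor is `O(t)`-close to `w` in `H¹`. -/

open MeasureTheory Filter Topology intervalIntegral

open Set

theorem exists_last_eq_of_le_of_lt {f : ℝ → ℝ} {p q c : ℝ} (hpq : p ≤ q)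
    (hf : ContinuousOn f (Icc p q)) (hp : f p ≤ c) (hq : c < f q) :
    ∃ a ∈ Ico p q, f a = c ∧ ∀ x ∈ Ioc a q, c < f x := by
  set S := Icc p q ∩ f ⁻¹' Iic c
  have hS : IsClosed S := hf.preimage_isClosed_of_isClosed isClosed_Icc isClosed_Iic
  have hpS : p ∈ S := ⟨⟨le_rfl, hpq⟩, hp⟩
  have haS : sSup S ∈ S := hS.csSup_mem ⟨p, hpS⟩ ⟨q, fun x hx => hx.1.2⟩
  have hgt : ∀ x ∈ Ioc (sSup S) q, c < f x := fun x hx => not_le.mp fun hle =>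
    hx.1.not_ge (le_csSup ⟨q, fun y hy => hy.1.2⟩ ⟨⟨haS.1.1.trans hx.1.le, hx.2⟩, hle⟩)
  have haq : sSup S < q := haS.1.2.lt_of_ne fun h => (h ▸ hq).not_ge haS.2
  refine ⟨sSup S, ⟨haS.1.1, haq⟩, le_antisymm haS.2 (not_lt.mp fun hlt => ?_), hgt⟩
  obtain ⟨y, hy, hfy⟩ := intermediate_value_Icc haq.le (hf.mono (Icc_subset_Icc_left haS.1.1))
    ⟨hlt.le, hq.le⟩
  rcases hy.1.eq_or_lt with rfl | hlt'
  · exact hlt.ne hfy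
  · exact (hgt y ⟨hlt', hy.2⟩).ne' hfy

theorem exists_first_eq_of_lt_of_le {f : ℝ → ℝ} {p q c : ℝ} (hpq : p ≤ q)
    (hf : ContinuousOn f (Icc p q)) (hp : c < f p) (hq : f q ≤ c) :
    ∃ b ∈ Ioc p q, f b = c ∧ ∀ x ∈ Ico p b, c < f x := by
  have hf' : ContinuousOn (fun x => f (-x)) (Icc (-q) (-p)) :=
    hf.comp continuousOn_neg fun x hx => ⟨le_neg.mp hx.2, neg_le.mp hx.1⟩
  obtain ⟨a, ha, hfa, hgt⟩ := exists_last_eq_of_le_of_lt (c := c) (neg_le_neg hpq) hf'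
    (by rwa [neg_neg]) (by rwa [neg_neg])
  refine ⟨-a, ⟨lt_neg.mp ha.2, neg_le.mp ha.1⟩, hfa, fun x hx => ?_⟩
  simpa using hgt (-x) ⟨lt_neg.mp hx.2, neg_le_neg hx.1⟩

theorem exists_Ioo_lt_of_continuousOn {f : ℝ → ℝ} {p q c x₀ : ℝ}
    (hf : ContinuousOn f (Icc p q)) (hp : f p ≤ c) (hx₀ : x₀ ∈ Icc p q) (hfx₀ : c < f x₀) :
    ∃ a b, p ≤ a ∧ a < x₀ ∧ x₀ ≤ b ∧ b ≤ q ∧ f a = c ∧ (∀ x ∈ Ioo a b, c < f x) ∧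
      (b < q → f b = c) := by
  obtain ⟨a, ha, hfa, hleft⟩ :=
    exists_last_eq_of_le_of_lt hx₀.1 (hf.mono (Icc_subset_Icc_right hx₀.2)) hp hfx₀
  by_cases hright : ∃ y ∈ Icc x₀ q, f y ≤ c
  · obtain ⟨y, hy, hfy⟩ := hright
    obtain ⟨b, hb, hfb, hright⟩ := exists_first_eq_of_lt_of_le hy.1
      (hf.mono (Icc_subset_Icc hx₀.1 hy.2)) hfx₀ hfy
    refine ⟨a, b, ha.1, ha.2, hb.1.le, hb.2.trans hy.2, hfa, fun x hx => ?_, fun _ => hfb⟩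
    rcases le_or_gt x x₀ with hx' | hx'
    exacts [hleft x ⟨hx.1, hx'⟩, hright x ⟨hx'.le, hx.2⟩]
  · push Not at hright
    refine ⟨a, q, ha.1, ha.2, hx₀.2, le_rfl, hfa, fun x hx => ?_, fun h => absurd h (lt_irrefl q)⟩
    rcases le_or_gt x x₀ with hx' | hx'
    exacts [hleft x ⟨hx.1, hx'⟩, hright x ⟨hx'.le, hx.2.le⟩]

theorem continuous_of_eq_ite_sq {φ : ℝ → ℝ} (hφ : ∀ s, φ s = if s < 1 then s ^ 2 / 2 else 1 / 2) :
    Continuous φ := by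
  have hφ_min : φ = fun s => min s 1 ^ 2 / 2 := by
    ext s
    rw [hφ]
    split_ifs with hs
    · rw [min_eq_left hs.le]
    · rw [min_eq_right (not_lt.mp hs)]; norm_num
  rw [hφ_min]
  fun_prop

section Primitive

variable {w g : ℝ → ℝ} {p q : ℝ}

theorem continuousOn_of_eq_primitive (hw : ∀ x ∈ Icc p q, w x = w p + ∫ t in p..x, g t)
    (hg : IntegrableOn g (Icc p q)) (hpq : p ≤ q) : ContinuousOn w (Icc p q) := by
  have hprim := continuousOn_primitive_interval (μ := volume) (a := p) (b := q) (f := g)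
    (by rwa [uIcc_of_le hpq])
  rw [uIcc_of_le hpq] at hprim
  exact (hprim.const_add (w p)).congr hw

theorem sub_eq_integral_of_eq_primitive (hw : ∀ x ∈ Icc p q, w x = w p + ∫ t in p..x, g t)
    (hg : IntegrableOn g (Icc p q)) {y z : ℝ} (hy : y ∈ Icc p q) (hz : z ∈ Icc p q) :
    w y - w z = ∫ t in z..y, g t := by
  have hp : p ∈ Icc p q := ⟨le_rfl, hy.1.trans hy.2⟩
  rw [hw y hy, hw z hz, add_sub_add_left_eq_sub, integral_interval_sub_left
    (hg.mono_set (uIcc_subset_Icc hp hy)).intervalIntegrable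
    (hg.mono_set (uIcc_subset_Icc hp hz)).intervalIntegrable]

end Primitive

theorem integral_indicator_Ioo {g : ℝ → ℝ} {a b c x : ℝ} (hca : c ≤ a) (hcx : c ≤ x) :
    ∫ s in c..x, (Ioo a b).indicator g s = ∫ s in a..max a (min x b), g s := by
  have hsets : (Ioc c x ∩ Ioo a b : Set ℝ) =ᵐ[volume] Ioc a (max a (min x b)) := by
    have hcut : Ioc c x ∩ Ioo a b = Ioc a x ∩ Ioo a b := by
      ext s
      simp only [mem_inter_iff, mem_Ioc, mem_Ioo]
      constructor <;> rintro ⟨⟨h₁, h₂⟩, h₃, h₄⟩ <;> exact ⟨⟨by linarith, h₂⟩, h₃, h₄⟩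
    have hmax : Ioc a (min x b) = Ioc a (max a (min x b)) := by
      rcases le_total (min x b) a with h | h
      · rw [max_eq_left h, Ioc_eq_empty h.not_gt, Ioc_self]
      · rw [max_eq_right h]
    rw [hcut, ← hmax]
    refine (Ioo_ae_eq_Ioc.symm.inter (ae_eq_refl _)).trans ?_
    rw [Ioo_inter_Ioo, max_self]
    exact Ioo_ae_eq_Ioc
  rw [integral_of_le hcx, integral_of_le (le_max_left _ _),
    setIntegral_indicator measurableSet_Ioo, setIntegral_congr_set hsets]

theorem setIntegral_sq_pos_of_intervalIntegral_ne_zero {g : ℝ → ℝ} {a b y : ℝ}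
    (hy : y ∈ Icc a b) (hg : IntegrableOn (fun x => g x ^ 2) (Ioo a b))
    (hne : ∫ x in a..y, g x ≠ 0) : 0 < ∫ x in Ioo a b, g x ^ 2 := by
  refine (setIntegral_nonneg measurableSet_Ioo fun x _ => sq_nonneg (g x)).lt_of_ne fun h => hne ?_
  have hzero : (fun x => g x ^ 2) =ᵐ[volume.restrict (Ioo a b)] 0 :=
    (integral_eq_zero_iff_of_nonneg (fun x => sq_nonneg (g x)) hg).mp h.symm
  have hzero' : g =ᵐ[volume.restrict (Ioo a y)] 0 := by
    refine ae_restrict_of_ae_restrict_of_subset (Ioo_subset_Ioo_right hy.2) ?_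
    filter_upwards [hzero] with x hx using pow_eq_zero_iff two_ne_zero |>.mp hx
  rw [integral_of_le hy.1, integral_Ioc_eq_integral_Ioo]
  exact integral_eq_zero_of_ae hzero'

theorem exists_pos_le_one_sq_mul_le (K : ℝ) {ε : ℝ} (hε : 0 < ε) :
    ∃ t : ℝ, 0 < t ∧ t ≤ 1 ∧ t ^ 2 * K ≤ ε := by
  have hlim : Tendsto (fun t : ℝ => t ^ 2 * K) (𝓝[>] 0) (𝓝 0) := by
    have hcont : Continuous fun t : ℝ => t ^ 2 * K := by fun_prop
    simpa using hcont.continuousWithinAt (s := Ioi 0) (x := 0) |>.tendsto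
  have hsmall : ∀ᶠ t in 𝓝[>] (0:ℝ), t ≤ 1 :=
    eventually_nhdsWithin_of_eventually_nhds (eventually_le_nhds zero_lt_one)
  exact (eventually_mem_nhdsWithin.and
    (hsmall.and (hlim.eventually (eventually_le_nhds hε)))).exists

/-- The primitive of `w' - t 1_(a,b) w'`; `max a (min x b)` is `x` clamped to `[a, b]`. -/
def shrinkOn (w : ℝ → ℝ) (a b t : ℝ) (x : ℝ) : ℝ :=
  w x - t * (w (max a (min x b)) - w a)

section Shrink

variable {w g : ℝ → ℝ} {a b t : ℝ}

theorem shrinkOn_of_le {x : ℝ} (hx : x ≤ a) : shrinkOn w a b t x = w x := by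
  rw [shrinkOn, max_eq_left ((min_le_left x b).trans hx), sub_self, mul_zero, sub_zero]

theorem shrinkOn_eq_primitive {p q : ℝ} (hw : ∀ x ∈ Icc p q, w x = w p + ∫ s in p..x, g s)
    (hg : IntegrableOn g (Icc p q)) (ha : a ∈ Icc p q) :
    ∀ x ∈ Icc p q, shrinkOn w a b t x =
      shrinkOn w a b t p + ∫ s in p..x, (g s - t * (Ioo a b).indicator g s) := by
  intro x hx
  have hp : p ∈ Icc p q := ⟨le_rfl, ha.1.trans ha.2⟩
  have hclamp : max a (min x b) ∈ Icc p q :=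
    ⟨ha.1.trans (le_max_left _ _), max_le ha.2 ((min_le_left x b).trans hx.2)⟩
  have hint : IntegrableOn g (uIcc p x) := hg.mono_set (uIcc_subset_Icc hp hx)
  rw [shrinkOn_of_le ha.1, integral_sub hint.intervalIntegrable
    ((hint.indicator measurableSet_Ioo).intervalIntegrable.const_mul t),
    intervalIntegral.integral_const_mul, integral_indicator_Ioo ha.1 hx.1, ← sub_eq_integral_of_eq_primitive hw hg hx hp,
    ← sub_eq_integral_of_eq_primitive hw hg hclamp ha, shrinkOn]
  ring

theorem comp_shrinkOn_eq {φ : ℝ → ℝ} {c q : ℝ} (hφ : ∀ s, c ≤ s → φ s = φ c)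
    (hwa : w a = c) (hwab : ∀ x ∈ Ioo a b, c < w x)
    (hwb : b < q → w b = c) (ht : t ≤ 1) {x : ℝ} (hxq : x < q) :
    φ (shrinkOn w a b t x) = φ (w x) := by
  rcases le_or_gt x a with hxa | hax
  · rw [shrinkOn_of_le hxa]
  rcases le_or_gt b x with hbx | hxb
  · have hclamp : w (max a (min x b)) = c := by
      rw [min_eq_right hbx]
      rcases max_choice a b with h | h <;> rw [h]
      exacts [hwa, hwb (hbx.trans_lt hxq)]
    rw [shrinkOn, hclamp, hwa, sub_self, mul_zero, sub_zero]
  · have hwx := hwab x ⟨hax, hxb⟩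
    have hshrink : shrinkOn w a b t x = c + (1 - t) * (w x - c) := by
      rw [shrinkOn, min_eq_left hxb.le, max_eq_right hax.le, hwa]; ring
    rw [hφ _ hwx.le, hφ _ (by rw [hshrink]; nlinarith)]

theorem integral_comp_shrinkOn_add_sq {φ : ℝ → ℝ} {c p q : ℝ} (κ : ℝ)
    (hφ : ∀ s, c ≤ s → φ s = φ c) (hwa : w a = c) (hwab : ∀ x ∈ Ioo a b, c < w x)
    (hwb : b < q → w b = c) (ht : t ≤ 1) (hsub : Ioo a b ⊆ Ioo p q)
    (hφw : IntegrableOn (fun x => φ (w x)) (Ioo p q))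
    (hg : IntegrableOn (fun x => g x ^ 2) (Ioo p q)) :
    ∫ x in Ioo p q, (φ (shrinkOn w a b t x) + κ * (g x - t * (Ioo a b).indicator g x) ^ 2) =
      (∫ x in Ioo p q, (φ (w x) + κ * g x ^ 2)) - κ * (t * (2 - t)) * ∫ x in Ioo a b, g x ^ 2 := by
  have hpt : EqOn (fun x => φ (shrinkOn w a b t x) + κ * (g x - t * (Ioo a b).indicator g x) ^ 2)
      (fun x => φ (w x) + κ * g x ^ 2 -
        κ * (t * (2 - t)) * (Ioo a b).indicator (fun x => g x ^ 2) x) (Ioo p q) := by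
    intro x hx
    dsimp only
    rw [comp_shrinkOn_eq hφ hwa hwab hwb ht hx.2]
    by_cases hxab : x ∈ Ioo a b
    · rw [indicator_of_mem hxab, indicator_of_mem hxab]; ring
    · rw [indicator_of_notMem hxab, indicator_of_notMem hxab]; ring
  have hJ : IntegrableOn (fun x => φ (w x) + κ * g x ^ 2) (Ioo p q) := hφw.add (hg.const_mul κ)
  rw [setIntegral_congr_fun measurableSet_Ioo hpt,
    integral_sub hJ ((hg.indicator measurableSet_Ioo).const_mul _), MeasureTheory.integral_const_mul, setIntegral_indicator measurableSet_Ioo,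
    inter_eq_right.mpr hsub]

theorem integral_sq_sub_shrinkOn (μ : Measure ℝ) :
    ∫ x, ((w x - shrinkOn w a b t x) ^ 2 + (g x - (g x - t * (Ioo a b).indicator g x)) ^ 2) ∂μ =
      t ^ 2 * ∫ x, ((w (max a (min x b)) - w a) ^ 2 + (Ioo a b).indicator g x ^ 2) ∂μ := by
  rw [← MeasureTheory.integral_const_mul]
  congr 1 with x
  rw [shrinkOn]
  ring

end Shrink

/-- If `w ∈ H¹(0,1)` with `w(0) = d < 1` is a local minimizer (in `H¹` norm) of
`J(w) = ∫₀¹ (φ(w) + ½ν²|w'|²)` with `φ(s) = ½s²` for `s < 1` and `φ(s) = ½`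
for `s ≥ 1`, then the set `{x ∈ [0,1] : w(x) > 1}` is empty. An `H¹(0,1)`
function is encoded as a pair `(w, g)` with `g ∈ L²(0,1)` and
`w(x) = w(0) + ∫₀ˣ g` on `[0,1]`; the `H¹` distance of `(w,g)` and `(v,h)` is
`(∫₀¹ ((w-v)² + (g-h)²))^(1/2)`. -/
theorem stmt_13 (ν : ℝ) (hν : 0 < ν) (d : ℝ) (hd : d < 1)
    (φ : ℝ → ℝ) (hφ : ∀ s : ℝ, φ s = if s < 1 then s ^ 2 / 2 else 1 / 2)
    (w g : ℝ → ℝ)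
    (hg : MemLp g 2 (volume.restrict (Set.Ioo (0:ℝ) 1)))
    (hw : ∀ x ∈ Set.Icc (0:ℝ) 1, w x = w 0 + ∫ t in (0:ℝ)..x, g t)
    (hbc : w 0 = d)
    (hmin : ∃ δ : ℝ, 0 < δ ∧
      ∀ v h : ℝ → ℝ,
        MemLp h 2 (volume.restrict (Set.Ioo (0:ℝ) 1)) →
        (∀ x ∈ Set.Icc (0:ℝ) 1, v x = v 0 + ∫ t in (0:ℝ)..x, h t) →
        v 0 = d →
        (∫ x in Set.Ioo (0:ℝ) 1, ((w x - v x) ^ 2 + (g x - h x) ^ 2)) ≤ δ ^ 2 →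
        (∫ x in Set.Ioo (0:ℝ) 1, (φ (w x) + ν ^ 2 / 2 * (g x) ^ 2)) ≤
          ∫ x in Set.Ioo (0:ℝ) 1, (φ (v x) + ν ^ 2 / 2 * (h x) ^ 2)) :
    {x ∈ Set.Icc (0:ℝ) 1 | 1 < w x} = ∅ := by
  obtain ⟨δ, hδ, hmin⟩ := hmin
  have hφ_const : ∀ s, 1 ≤ s → φ s = φ 1 := fun s hs => by
    rw [hφ, hφ, if_neg hs.not_gt, if_neg (lt_irrefl 1)]
  have hgI : IntegrableOn g (Icc 0 1) :=
    (integrableOn_Icc_iff_integrableOn_Ioo).mpr (hg.integrable one_le_two)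
  have hg2 : IntegrableOn (fun x => g x ^ 2) (Ioo 0 1) := hg.integrable_sq
  have hwc := continuousOn_of_eq_primitive hw hgI zero_le_one
  have hφw : IntegrableOn (fun x => φ (w x)) (Ioo 0 1) :=
    ((continuous_of_eq_ite_sq hφ).comp_continuousOn hwc).integrableOn_Icc.mono_set
      Ioo_subset_Icc_self
  refine eq_empty_of_forall_notMem fun x₀ ⟨hx₀, hwx₀⟩ => ?_
  obtain ⟨a, b, ha0, hax₀, hx₀b, hb1, hwa, hwab, hwb⟩ :=
    exists_Ioo_lt_of_continuousOn hwc (hbc ▸ hd.le) hx₀ hwx₀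
  have haI : a ∈ Icc (0:ℝ) 1 := ⟨ha0, hax₀.le.trans hx₀.2⟩
  have hsub : Ioo a b ⊆ Ioo 0 1 := Ioo_subset_Ioo ha0 hb1
  obtain ⟨t, ht0, ht1, htδ⟩ := exists_pos_le_one_sq_mul_le
    (∫ x in Ioo (0:ℝ) 1, ((w (max a (min x b)) - w a) ^ 2 + (Ioo a b).indicator g x ^ 2))
    (pow_pos hδ 2)
  have hJ := hmin (shrinkOn w a b t) (fun x => g x - t * (Ioo a b).indicator g x)
    (hg.sub ((hg.indicator measurableSet_Ioo).const_mul t))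
    (shrinkOn_eq_primitive hw hgI haI) (by rw [shrinkOn_of_le ha0, hbc])
    (by rw [integral_sq_sub_shrinkOn]; exact htδ)
  rw [integral_comp_shrinkOn_add_sq _ hφ_const hwa hwab hwb ht1 hsub hφw hg2] at hJ
  have hgab : 0 < ∫ x in Ioo a b, g x ^ 2 :=
    setIntegral_sq_pos_of_intervalIntegral_ne_zero ⟨hax₀.le, hx₀b⟩
      (hg2.mono_set hsub)
      (by rw [← sub_eq_integral_of_eq_primitive hw hgI hx₀ haI, hwa]; linarith)
  have hdecrease : 0 < ν ^ 2 / 2 * (t * (2 - t)) * ∫ x in Ioo a b, g x ^ 2 :=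
    mul_pos (mul_pos (by positivity) (mul_pos ht0 (by linarith))) hgab
  linarith
end

section
/- Suppose w ∈ H¹(0,1) with w(0) = d > 1 is a local minimizer of J(w) = ∫₀¹(φ(w) + ½ν²|w'|²)dx. Then {x ∈ [0,1] : w(x) > 1} is either all of [0,1] or an interval of the form [0,ζ) (equivalently (0,ζ] up to the endpoint with w(ζ)=1) for some ζ ∈ (0,1); in particular it cannot have a connected component (α,1] with w(α) = 1 nor an interior component (β,γ) with w(β) = w(γ) = 1. -/
/-!
Let `w ≥ 1` on `[a, b]`, where either `b = 1` or `w b = w a`. The competitor that replaces `w` by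
`w - t (w - w a)` on `[a, b]` and by `w - t (w b - w a)` after `b` has the same `φ`-energy, since
`φ` is constant on `[1, ∞)` and the shift after `b` is zero, while its derivative on `(a, b)` is
`(1 - t) w'`. For small `t > 0` it is `H¹`-close to `w`, so local minimality forces `w' = 0` a.e.
on `(a, b)`: `w` is constant on `[a, b]`. Now a component `(α, β)` or `(α, 1]` of `{w > 1}` with
`w α = 1` (and `w β = 1`) would make `w ≡ 1` on it, and if `w > 1` on `[0, 1)` with `w 1 = 1`,
then `w ≡ d > 1` on `[0, 1]`. So `{w > 1}` is `[0, 1]` or the interval `[0, ζ)` before the first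
zero `ζ` of `w - 1`.
-/

open MeasureTheory Filter Topology intervalIntegral Set

def IsPrimitiveOnUnitInterval (w g : ℝ → ℝ) : Prop :=
  ∀ x ∈ Icc (0:ℝ) 1, w x = w 0 + ∫ t in (0:ℝ)..x, g t

def IsLocalEnergyMinimizer (φ : ℝ → ℝ) (ν d : ℝ) (w g : ℝ → ℝ) : Prop :=
  ∃ δ : ℝ, 0 < δ ∧ ∀ v h : ℝ → ℝ,
    MemLp h 2 (volume.restrict (Ioo (0:ℝ) 1)) → IsPrimitiveOnUnitInterval v h → v 0 = d →
    (∫ x in Ioo (0:ℝ) 1, ((w x - v x) ^ 2 + (g x - h x) ^ 2)) ≤ δ ^ 2 →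
    (∫ x in Ioo (0:ℝ) 1, (φ (w x) + ν ^ 2 / 2 * (g x) ^ 2)) ≤
      ∫ x in Ioo (0:ℝ) 1, (φ (v x) + ν ^ 2 / 2 * (h x) ^ 2)

namespace IsPrimitiveOnUnitInterval

variable {w g u k : ℝ → ℝ}

theorem of_integral (f : ℝ → ℝ) :
    IsPrimitiveOnUnitInterval (fun x => ∫ t in (0:ℝ)..x, f t) f :=
  fun x _ => by simp

theorem sub_const_mul (hw : IsPrimitiveOnUnitInterval w g) (hu : IsPrimitiveOnUnitInterval u k)
    (hg : IntegrableOn g (Icc 0 1)) (hk : IntegrableOn k (Icc 0 1)) (t : ℝ) :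
    IsPrimitiveOnUnitInterval (fun x => w x - t * u x) (fun x => g x - t * k x) := by
  intro x hx
  have hI : ∀ {f : ℝ → ℝ}, IntegrableOn f (Icc 0 1) → IntervalIntegrable f volume 0 x :=
    fun hf => (hf.mono_set (uIcc_subset_Icc ⟨le_rfl, zero_le_one⟩ hx)).intervalIntegrable
  dsimp only
  rw [integral_sub (hI hg) ((hI hk).const_mul t), intervalIntegral.integral_const_mul, hw x hx,
    hu x hx]
  ring

theorem integral_Ioc_eq_sub (hw : IsPrimitiveOnUnitInterval w g) (hg : IntegrableOn g (Icc 0 1))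
    {p q : ℝ} (hp : 0 ≤ p) (hpq : p ≤ q) (hq : q ≤ 1) :
    ∫ s in Ioc p q, g s = w q - w p := by
  have hI : ∀ {x : ℝ}, x ∈ Icc (0:ℝ) 1 → IntervalIntegrable g volume 0 x :=
    fun hx => (hg.mono_set (uIcc_subset_Icc ⟨le_rfl, zero_le_one⟩ hx)).intervalIntegrable
  have hpI : p ∈ Icc (0:ℝ) 1 := ⟨hp, hpq.trans hq⟩
  have hqI : q ∈ Icc (0:ℝ) 1 := ⟨hp.trans hpq, hq⟩
  rw [← integral_of_le hpq, ← integral_interval_sub_left (hI hqI) (hI hpI), hw q hqI, hw p hpI]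
  ring

theorem continuousOn (hw : IsPrimitiveOnUnitInterval w g) (hg : IntegrableOn g (Icc 0 1)) :
    ContinuousOn w (Icc 0 1) := by
  have hprim := continuousOn_primitive_interval (μ := volume) (a := 0) (b := 1)
    (by rwa [uIcc_of_le zero_le_one])
  rw [uIcc_of_le zero_le_one] at hprim
  exact (continuousOn_const.add hprim).congr hw

theorem integral_indicator_Ioc (hw : IsPrimitiveOnUnitInterval w g)
    (hg : IntegrableOn g (Icc 0 1)) {a b x : ℝ} (ha : 0 ≤ a) (hb : b ≤ 1) (hx : 0 ≤ x) :
    ∫ s in (0:ℝ)..x, (Ioc a b).indicator g s = w (max a (min x b)) - w a := by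
  rw [integral_of_le hx, setIntegral_indicator measurableSet_Ioc, Ioc_inter_Ioc, max_eq_right ha]
  rcases le_total (min x b) a with h | h
  · rw [Ioc_eq_empty h.not_gt, max_eq_left h]
    simp
  · rw [max_eq_right h]
    exact hw.integral_Ioc_eq_sub hg ha h ((min_le_right _ _).trans hb)

end IsPrimitiveOnUnitInterval

theorem integral_energy_sub_indicator {φ v w g : ℝ → ℝ} {a b : ℝ} (ν t : ℝ)
    (hφw : IntegrableOn (fun x => φ (w x)) (Ioo 0 1))
    (hg : MemLp g 2 (volume.restrict (Ioo 0 1))) (hvw : EqOn (φ ∘ v) (φ ∘ w) (Ioo 0 1))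
    (ha : 0 ≤ a) (hb : b ≤ 1) :
    ∫ x in Ioo (0:ℝ) 1, (φ (v x) + ν ^ 2 / 2 * (g x - t * (Ioc a b).indicator g x) ^ 2) =
      (∫ x in Ioo (0:ℝ) 1, (φ (w x) + ν ^ 2 / 2 * g x ^ 2)) +
        ν ^ 2 / 2 * (t ^ 2 - 2 * t) * ∫ x in Ioc a b, g x ^ 2 := by
  have hsq : ∀ x, (g x - t * (Ioc a b).indicator g x) ^ 2 =
      g x ^ 2 + (t ^ 2 - 2 * t) * (Ioc a b).indicator (fun y => g y ^ 2) x := by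
    intro x
    by_cases hx : x ∈ Ioc a b
    · simp only [indicator_of_mem hx]
      ring
    · simp only [indicator_of_notMem hx]
      ring
  have hg2 := hg.integrable_sq
  have hind : ∫ x in Ioo (0:ℝ) 1, (Ioc a b).indicator (fun y => g y ^ 2) x =
      ∫ x in Ioc a b, g x ^ 2 := by
    rw [← integral_Icc_eq_integral_Ioo, setIntegral_indicator measurableSet_Ioc,
      inter_eq_right.2 (Ioc_subset_Icc_self.trans (Icc_subset_Icc ha hb))]
  calc _ = ∫ x in Ioo (0:ℝ) 1, ((φ (w x) + ν ^ 2 / 2 * g x ^ 2) +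
        ν ^ 2 / 2 * (t ^ 2 - 2 * t) * (Ioc a b).indicator (fun y => g y ^ 2) x) :=
        setIntegral_congr_fun measurableSet_Ioo fun x hx => by
          simp only [← Function.comp_apply (f := φ), hvw hx, hsq]
          ring
    _ = _ := by
      have hE : IntegrableOn (fun x => φ (w x) + ν ^ 2 / 2 * g x ^ 2) (Ioo 0 1) :=
        hφw.add (hg2.const_mul _)
      rw [MeasureTheory.integral_add hE ((hg2.indicator measurableSet_Ioc).const_mul _),
        MeasureTheory.integral_const_mul, hind]

theorem exists_pos_lt_one_sq_mul_le (C : ℝ) {ε : ℝ} (hε : 0 < ε) :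
    ∃ t : ℝ, 0 < t ∧ t < 1 ∧ t ^ 2 * C ≤ ε := by
  have hlim : Tendsto (fun t : ℝ => t ^ 2 * C) (𝓝[>] 0) (𝓝 0) := by
    have : Tendsto (fun t : ℝ => t ^ 2 * C) (𝓝 0) (𝓝 (0 ^ 2 * C)) :=
      (continuous_id.pow 2 |>.mul continuous_const).tendsto 0
    simpa using this.mono_left nhdsWithin_le_nhds
  have hsmall : ∀ᶠ t in 𝓝[>] (0:ℝ), t ∈ Ioo 0 1 := Ioo_mem_nhdsGT one_pos
  obtain ⟨t, ht, htC⟩ := (hsmall.and (hlim.eventually (ge_mem_nhds hε))).exists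
  exact ⟨t, ht.1, ht.2, htC⟩

theorem integral_Ioc_eq_zero_of_integral_sq_eq_zero {g : ℝ → ℝ} {a b x : ℝ}
    (hg : IntegrableOn (fun y => g y ^ 2) (Ioc a b)) (h : ∫ y in Ioc a b, g y ^ 2 = 0)
    (hx : x ≤ b) : ∫ y in Ioc a x, g y = 0 := by
  have h0 : (fun y => g y ^ 2) =ᵐ[volume.restrict (Ioc a b)] 0 :=
    (integral_eq_zero_iff_of_nonneg (fun _ => sq_nonneg _) hg).1 h
  apply integral_eq_zero_of_ae
  filter_upwards [ae_restrict_of_ae_restrict_of_subset (Ioc_subset_Ioc_right hx) h0] with y hy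
  exact pow_eq_zero_iff two_ne_zero |>.1 hy

section Crossing

variable {f : ℝ → ℝ} {p q c : ℝ}

theorem exists_last_crossing (hpq : p ≤ q) (hf : ContinuousOn f (Icc p q)) (hp : f p ≤ c)
    (hq : c < f q) : ∃ α ∈ Ico p q, f α = c ∧ ∀ y ∈ Ioc α q, c < f y := by
  set T := Icc p q ∩ f ⁻¹' Iic c
  have hTbdd : BddAbove T := bddAbove_Icc.mono inter_subset_left
  obtain ⟨⟨hpα, hαq⟩, hfα⟩ : sSup T ∈ T :=
    (hf.preimage_isClosed_of_isClosed isClosed_Icc isClosed_Iic).csSup_mem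
      ⟨p, ⟨le_rfl, hpq⟩, hp⟩ hTbdd
  have hafter : ∀ y ∈ Ioc (sSup T) q, c < f y := fun y hy => lt_of_not_ge fun hfy =>
    hy.1.not_ge (le_csSup hTbdd ⟨⟨hpα.trans hy.1.le, hy.2⟩, hfy⟩)
  refine ⟨sSup T, ⟨hpα, hαq.lt_of_ne (ne_of_apply_ne f (hfα.trans_lt hq).ne)⟩, ?_, hafter⟩
  obtain ⟨z, hz, hfz⟩ :=
    intermediate_value_Icc hαq (hf.mono (Icc_subset_Icc hpα le_rfl)) ⟨hfα, hq.le⟩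
  rcases hz.1.eq_or_lt with h | h
  · rwa [h]
  · exact absurd hfz (hafter z ⟨h, hz.2⟩).ne'

theorem exists_first_crossing (hpq : p ≤ q) (hf : ContinuousOn f (Icc p q)) (hp : c < f p)
    (hq : f q ≤ c) : ∃ β ∈ Ioc p q, f β = c ∧ ∀ y ∈ Ico p β, c < f y := by
  set T := Icc p q ∩ f ⁻¹' Iic c
  have hTbdd : BddBelow T := bddBelow_Icc.mono inter_subset_left
  obtain ⟨⟨hpβ, hβq⟩, hfβ⟩ : sInf T ∈ T :=
    (hf.preimage_isClosed_of_isClosed isClosed_Icc isClosed_Iic).csInf_mem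
      ⟨q, ⟨hpq, le_rfl⟩, hq⟩ hTbdd
  have hbefore : ∀ y ∈ Ico p (sInf T), c < f y := fun y hy => lt_of_not_ge fun hfy =>
    hy.2.not_ge (csInf_le hTbdd ⟨⟨hy.1, hy.2.le.trans hβq⟩, hfy⟩)
  refine ⟨sInf T, ⟨hpβ.lt_of_ne (ne_of_apply_ne f (hfβ.trans_lt hp).ne'), hβq⟩, ?_, hbefore⟩
  obtain ⟨z, hz, hfz⟩ :=
    intermediate_value_Icc' hpβ (hf.mono (Icc_subset_Icc le_rfl hβq)) ⟨hfβ, hp.le⟩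
  rcases hz.2.lt_or_eq with h | h
  · exact absurd hfz (hbefore z ⟨hz.1, h⟩).ne'
  · rwa [← h]

end Crossing

theorem le_of_le_of_forall_plateau {w : ℝ → ℝ} {c p x : ℝ} (hw : ContinuousOn w (Icc 0 1))
    (hplateau : ∀ a b, 0 ≤ a → a < b → b ≤ 1 → (∀ y ∈ Icc a b, c ≤ w y) →
      (w b = w a ∨ b = 1) → ∀ y ∈ Icc a b, w y = w a)
    (hp : 0 ≤ p) (hpx : p ≤ x) (hx : x ≤ 1) (hwp : w p ≤ c) : w x ≤ c := by
  by_contra! hwx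
  obtain ⟨α, hα, hwα, habove⟩ :=
    exists_last_crossing hpx (hw.mono (Icc_subset_Icc hp hx)) hwp hwx
  have hα0 : 0 ≤ α := hp.trans hα.1
  suffices w x = w α by linarith
  by_cases hdrop : ∃ y ∈ Icc x 1, w y ≤ c
  · obtain ⟨y, hy, hwy⟩ := hdrop
    obtain ⟨β, hβ, hwβ, habove'⟩ :=
      exists_first_crossing hy.1 (hw.mono (Icc_subset_Icc (hp.trans hpx) hy.2)) hwx hwy
    refine hplateau α β hα0 (hα.2.trans_le hβ.1.le) (hβ.2.trans hy.2) (fun z hz => ?_)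
      (.inl (hwβ.trans hwα.symm)) x ⟨hα.2.le, hβ.1.le⟩
    rcases hz.1.eq_or_lt with rfl | hαz
    · exact hwα.ge
    rcases le_or_gt z x with hzx | hxz
    · exact (habove z ⟨hαz, hzx⟩).le
    rcases hz.2.lt_or_eq with hzβ | rfl
    · exact (habove' z ⟨hxz.le, hzβ⟩).le
    · exact hwβ.ge
  · push Not at hdrop
    refine hplateau α 1 hα0 (hα.2.trans_le hx) le_rfl (fun z hz => ?_) (.inr rfl) x ⟨hα.2.le, hx⟩
    rcases hz.1.eq_or_lt with rfl | hαz
    · exact hwα.ge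
    rcases le_or_gt z x with hzx | hxz
    · exact (habove z ⟨hαz, hzx⟩).le
    · exact (hdrop z ⟨hxz.le, hz.2⟩).le

theorem apply_sub_mul_sub_eq {φ w : ℝ → ℝ} {a b c t x : ℝ} (hφc : ∀ s, c ≤ s → φ s = φ c)
    (ht0 : 0 ≤ t) (ht1 : t ≤ 1) (hab : a ≤ b) (hc : ∀ y ∈ Icc a b, c ≤ w y)
    (hend : w b = w a ∨ b = 1) (hx : x < 1) :
    φ (w x - t * (w (max a (min x b)) - w a)) = φ (w x) := by
  rcases lt_or_ge x a with hxa | hax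
  · rw [max_eq_left ((min_le_left _ _).trans hxa.le)]
    simp
  rcases le_or_gt x b with hxb | hbx
  · rw [min_eq_left hxb, max_eq_right hax]
    have hwx := hc x ⟨hax, hxb⟩
    have hwa := hc a ⟨le_rfl, hab⟩
    have hv : c ≤ w x - t * (w x - w a) := by
      nlinarith [mul_nonneg (sub_nonneg.2 ht1) (sub_nonneg.2 hwx),
        mul_nonneg ht0 (sub_nonneg.2 hwa)]
    rw [hφc _ hv, hφc _ hwx]
  · rw [min_eq_right hbx.le, max_eq_right hab]
    rcases hend with h | h
    · simp [h]
    · linarith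

theorem IsLocalEnergyMinimizer.eq_left_of_le_on_Icc {φ : ℝ → ℝ} {ν d c a b : ℝ} {w g : ℝ → ℝ}
    (hmin : IsLocalEnergyMinimizer φ ν d w g) (hν : ν ≠ 0) (hφ : Continuous φ)
    (hφc : ∀ s, c ≤ s → φ s = φ c) (hg : MemLp g 2 (volume.restrict (Ioo 0 1)))
    (hw : IsPrimitiveOnUnitInterval w g) (hbc : w 0 = d)
    (ha : 0 ≤ a) (hab : a ≤ b) (hb : b ≤ 1) (hc : ∀ x ∈ Icc a b, c ≤ w x)
    (hend : w b = w a ∨ b = 1) :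
    ∀ x ∈ Icc a b, w x = w a := by
  obtain ⟨δ, hδ, hmin⟩ := hmin
  have hgI : IntegrableOn g (Icc 0 1) :=
    (integrableOn_Icc_iff_integrableOn_Ioo).2 (hg.integrable one_le_two)
  set F : ℝ → ℝ := fun x => ∫ s in (0:ℝ)..x, (Ioc a b).indicator g s
  have hF : ∀ x ∈ Icc (0:ℝ) 1, F x = w (max a (min x b)) - w a :=
    fun x hx => hw.integral_indicator_Ioc hgI ha hb hx.1
  obtain ⟨t, ht0, ht1, htC⟩ := exists_pos_lt_one_sq_mul_le
    (∫ x in Ioo (0:ℝ) 1, (F x ^ 2 + (Ioc a b).indicator g x ^ 2)) (pow_pos hδ 2)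
  -- On `[a, b]` the competitor is `w - t (w - w a) ≥ c`, elsewhere it is `w` itself.
  have hφv : EqOn (φ ∘ fun x => w x - t * F x) (φ ∘ w) (Ioo 0 1) := fun x hx => by
    simp only [Function.comp_apply, hF x (Ioo_subset_Icc_self hx)]
    exact apply_sub_mul_sub_eq hφc ht0.le ht1.le hab hc hend hx.2
  have hcomp := hmin (fun x => w x - t * F x) (fun x => g x - t * (Ioc a b).indicator g x)
    (hg.sub ((hg.indicator measurableSet_Ioc).const_mul t))
    (hw.sub_const_mul (.of_integral _) hgI (hgI.indicator measurableSet_Ioc) t)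
    (by simp [F, hbc])
    (by
      calc _ = ∫ x in Ioo (0:ℝ) 1, t ^ 2 * (F x ^ 2 + (Ioc a b).indicator g x ^ 2) := by
            congr 1; funext x; ring
        _ ≤ δ ^ 2 := by rwa [MeasureTheory.integral_const_mul])
  have hφw : IntegrableOn (fun x => φ (w x)) (Ioo 0 1) :=
    ((hφ.comp_continuousOn (hw.continuousOn hgI)).integrableOn_Icc).mono_set Ioo_subset_Icc_self
  rw [integral_energy_sub_indicator ν t hφw hg hφv ha hb] at hcomp
  have hg2 : IntegrableOn (fun y => g y ^ 2) (Ioc a b) :=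
    ((integrableOn_Icc_iff_integrableOn_Ioo).2 hg.integrable_sq).mono_set
      (Ioc_subset_Icc_self.trans (Icc_subset_Icc ha hb))
  have hcoef : ν ^ 2 / 2 * (t ^ 2 - 2 * t) < 0 :=
    mul_neg_of_pos_of_neg (by positivity) (by nlinarith)
  have hzero : ∫ x in Ioc a b, g x ^ 2 = 0 :=
    le_antisymm (nonpos_of_mul_nonneg_right (by linarith) hcoef)
      (setIntegral_nonneg measurableSet_Ioc fun _ _ => sq_nonneg _)
  intro x hx
  have := hw.integral_Ioc_eq_sub hgI ha hx.1 (hx.2.trans hb)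
  rw [integral_Ioc_eq_zero_of_integral_sq_eq_zero hg2 hzero hx.2] at this
  linarith

theorem eq_min_sq_div_two {φ : ℝ → ℝ} (hφ : ∀ s : ℝ, φ s = if s < 1 then s ^ 2 / 2 else 1 / 2) :
    φ = fun s => min s 1 ^ 2 / 2 := funext fun s => by
  rw [hφ]
  split_ifs with hs
  · rw [min_eq_left hs.le]
  · rw [min_eq_right (not_lt.1 hs)]
    norm_num

/-- If `w ∈ H¹(0,1)` with `w(0) = d > 1` is a local minimizer (in `H¹` norm) of
`J(w) = ∫₀¹ (φ(w) + ½ν²|w'|²)` with `φ(s) = ½s²` for `s < 1` and `φ(s) = ½`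
for `s ≥ 1`, then the debonded set `{x ∈ [0,1] : w(x) > 1}` is either all of
`[0,1]` or an interval `[0,ζ)` with `ζ ∈ (0,1)` and `w(ζ) = 1`. An `H¹(0,1)`
function is encoded as a pair `(w, g)` with `g ∈ L²(0,1)` and
`w(x) = w(0) + ∫₀ˣ g` on `[0,1]`. -/
theorem stmt_14 (ν : ℝ) (hν : 0 < ν) (d : ℝ) (hd : 1 < d)
    (φ : ℝ → ℝ) (hφ : ∀ s : ℝ, φ s = if s < 1 then s ^ 2 / 2 else 1 / 2)
    (w g : ℝ → ℝ)
    (hg : MemLp g 2 (volume.restrict (Set.Ioo (0:ℝ) 1)))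
    (hw : ∀ x ∈ Set.Icc (0:ℝ) 1, w x = w 0 + ∫ t in (0:ℝ)..x, g t)
    (hbc : w 0 = d)
    (hmin : ∃ δ : ℝ, 0 < δ ∧
      ∀ v h : ℝ → ℝ,
        MemLp h 2 (volume.restrict (Set.Ioo (0:ℝ) 1)) →
        (∀ x ∈ Set.Icc (0:ℝ) 1, v x = v 0 + ∫ t in (0:ℝ)..x, h t) →
        v 0 = d →
        (∫ x in Set.Ioo (0:ℝ) 1, ((w x - v x) ^ 2 + (g x - h x) ^ 2)) ≤ δ ^ 2 →
        (∫ x in Set.Ioo (0:ℝ) 1, (φ (w x) + ν ^ 2 / 2 * (g x) ^ 2)) ≤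
          ∫ x in Set.Ioo (0:ℝ) 1, (φ (v x) + ν ^ 2 / 2 * (h x) ^ 2)) :
    {x ∈ Set.Icc (0:ℝ) 1 | 1 < w x} = Set.Icc (0:ℝ) 1 ∨
    ∃ ζ ∈ Set.Ioo (0:ℝ) 1, w ζ = 1 ∧
      {x ∈ Set.Icc (0:ℝ) 1 | 1 < w x} = Set.Ico (0:ℝ) ζ := by
  have hφ_eq := eq_min_sq_div_two hφ
  have hgI : IntegrableOn g (Icc 0 1) :=
    (integrableOn_Icc_iff_integrableOn_Ioo).2 (hg.integrable one_le_two)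
  have hwc := IsPrimitiveOnUnitInterval.continuousOn hw hgI
  have hplateau : ∀ a b, 0 ≤ a → a < b → b ≤ 1 → (∀ y ∈ Icc a b, 1 ≤ w y) →
      (w b = w a ∨ b = 1) → ∀ y ∈ Icc a b, w y = w a := fun a b ha hab hb =>
    IsLocalEnergyMinimizer.eq_left_of_le_on_Icc hmin hν.ne' (hφ_eq ▸ by fun_prop)
      (fun s hs => by simp [hφ_eq, hs]) hg hw hbc ha hab.le hb
  by_cases hall : ∀ x ∈ Icc (0:ℝ) 1, 1 < w x
  · exact .inl (sep_eq_self_iff_mem_true.2 hall)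
  push Not at hall
  obtain ⟨y, hy, hwy⟩ := hall
  obtain ⟨ζ, hζ, hwζ, hbefore⟩ :=
    exists_first_crossing hy.1 (hwc.mono (Icc_subset_Icc le_rfl hy.2)) (hbc ▸ hd) hwy
  have hζ1 : ζ < 1 := by
    refine (hζ.2.trans hy.2).lt_of_ne fun h => ?_
    have hw1 := hplateau 0 1 le_rfl one_pos le_rfl (fun z hz => ?_) (.inr rfl) 1
      ⟨zero_le_one, le_rfl⟩
    · linarith [h ▸ hwζ]
    rcases hz.2.lt_or_eq with hz1 | rfl
    · exact (hbefore z ⟨hz.1, h ▸ hz1⟩).le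
    · exact (h ▸ hwζ).ge
  refine .inr ⟨ζ, ⟨hζ.1, hζ1⟩, hwζ, Subset.antisymm (fun x ⟨hx, hwx⟩ => ⟨hx.1, ?_⟩)
    fun x hx => ⟨⟨hx.1, hx.2.le.trans hζ1.le⟩, hbefore x hx⟩⟩
  by_contra! hζx
  exact (le_of_le_of_forall_plateau hwc hplateau hζ.1.le hζx hx.2 hwζ.le).not_gt hwx
end

section
/- For fixed ν > 0 and ζ ∈ (0,1), as n → ∞ both discrete stability thresholds converge to the continuum value: with ξ = ⌊ζn⌋ and η = η(n) > 0 solving cosh(η) = 1 + 1/(2n²ν²), one has d₁(ξ) → 1 + (ζ/ν)tanh((1-ζ)/ν) and d₂(ξ) → 1 + (ζ/ν)tanh((1-ζ)/ν); in particular nη(n) → 1/ν. -/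
/-!
Since `cosh η = 1 + 2 sinh² (η/2)`, the equation defining `η` says exactly
`sinh (η/2) = 1/(2nν)`, and `sinh y ~ y` gives `nη → 1/ν`. Multiplying numerator and
denominator of `dᵢ` by `sinh (η/2)` replaces `coth (η/2)` by `cosh (η/2) → 1` and turns the
numerator into `2ξ sinh (η/2) = ξ/(nν) → ζ/ν`, while `(n - ξ + 1)η → (1 - ζ)/ν`.
-/

open Filter Topology Real

theorem Real.sinh_half_eq_of_cosh_eq {x s : ℝ} (hx : 0 ≤ x) (hs : 0 ≤ s)
    (h : cosh x = 1 + 2 * s ^ 2) : sinh (x / 2) = s := by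
  have hdouble : cosh x = 1 + 2 * sinh (x / 2) ^ 2 := by
    rw [← mul_div_cancel₀ x two_ne_zero, cosh_two_mul, cosh_sq', mul_div_cancel₀ x two_ne_zero]
    ring
  refine (pow_left_inj₀ (sinh_nonneg_iff.2 (by linarith)) hs two_ne_zero).1 ?_
  linarith

theorem Real.tendsto_sinh_div_self : Tendsto (fun x => sinh x / x) (𝓝[≠] 0) (𝓝 1) := by
  simpa [div_eq_inv_mul] using (hasDerivAt_sinh 0).tendsto_slope_zero

theorem tendsto_natCast_mul_of_sinh_half_eq {c : ℝ} {η : ℕ → ℝ}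
    (hη : ∀ᶠ n in atTop, 0 < η n ∧ sinh (η n / 2) = c / n) :
    Tendsto (fun n : ℕ => n * η n) atTop (𝓝 (2 * c)) := by
  have hhalf : Tendsto (fun n => η n / 2) atTop (𝓝[≠] 0) := by
    refine tendsto_nhdsWithin_iff.2 ⟨?_, hη.mono fun n hn => by simp [hn.1.ne']⟩
    have harsinh : Tendsto (fun n : ℕ => arsinh (c / n)) atTop (𝓝 0) := by
      simpa [Function.comp_def] using
        (continuous_arsinh.tendsto 0).comp (tendsto_const_div_atTop_nhds_zero_nat c)
    refine harsinh.congr' (hη.mono fun n hn => ?_)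
    rw [← hn.2, arsinh_sinh]
  have hlim := (tendsto_const_nhds (x := 2 * c)).div (tendsto_sinh_div_self.comp hhalf) one_ne_zero
  rw [div_one] at hlim
  refine hlim.congr' ((hη.and (eventually_ne_atTop 0)).mono fun n ⟨⟨hpos, hsinh⟩, hn⟩ => ?_)
  have hs : sinh (η n / 2) ≠ 0 := by rw [Ne, sinh_eq_zero]; positivity
  have hn' : (n : ℝ) ≠ 0 := Nat.cast_ne_zero.2 hn
  simp only [Pi.div_apply, Function.comp_apply]
  rw [hsinh] at hs ⊢
  have hc : c ≠ 0 := (div_ne_zero_iff.1 hs).1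
  field_simp

theorem tendsto_two_mul_div_coth_mul_coth_add {α : Type*} {l : Filter α} {N X η : α → ℝ}
    {ζ μ : ℝ} (a b : ℝ) (hN : Tendsto N l atTop) (hX : Tendsto (fun i => X i / N i) l (𝓝 ζ))
    (hη : Tendsto (fun i => N i * η i) l (𝓝 μ)) (hη0 : ∀ᶠ i in l, 0 < η i)
    (hL : (1 - ζ) * μ ≠ 0) :
    Tendsto (fun i => 2 * (X i + a) /
        (cosh (η i / 2) / sinh (η i / 2) *
          (cosh ((N i - X i + 1) * η i) / sinh ((N i - X i + 1) * η i)) + b)) l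
      (𝓝 (ζ * μ * tanh ((1 - ζ) * μ))) := by
  set L := (1 - ζ) * μ
  have hinv : Tendsto (fun i => (N i)⁻¹) l (𝓝 0) := tendsto_inv_atTop_zero.comp hN
  have hNpos : ∀ᶠ i in l, N i ≠ 0 := (hN.eventually_gt_atTop 0).mono fun i hi => hi.ne'
  have hhalf : Tendsto (fun i => η i / 2) l (𝓝[≠] 0) := by
    refine tendsto_nhdsWithin_iff.2 ⟨?_, hη0.mono fun i hi => by simp [hi.ne']⟩
    have := (hinv.mul hη).div_const 2
    rw [zero_mul, zero_div] at this
    refine this.congr' (hNpos.mono fun i hi => ?_)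
    field_simp
  have hhalf' := hhalf.mono_right nhdsWithin_le_nhds
  have hB : Tendsto (fun i => (N i - X i + 1) * η i) l (𝓝 L) := by
    have := ((tendsto_const_nhds (x := (1 : ℝ)).sub hX).add hinv).mul hη
    rw [add_zero] at this
    refine this.congr' (hNpos.mono fun i hi => ?_)
    field_simp
  have hnum : Tendsto (fun i => 2 * (X i + a) * sinh (η i / 2)) l (𝓝 (ζ * μ)) := by
    have := ((hX.add (hinv.const_mul a)).mul hη).mul (tendsto_sinh_div_self.comp hhalf)
    rw [mul_zero, add_zero, mul_one] at this
    refine this.congr' ((hNpos.and hη0).mono fun i ⟨hi, hηi⟩ => ?_)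
    simp only [Function.comp_apply]
    field_simp
  have hden : Tendsto (fun i => cosh (η i / 2) *
      (cosh ((N i - X i + 1) * η i) / sinh ((N i - X i + 1) * η i)) + b * sinh (η i / 2)) l
      (𝓝 (cosh L / sinh L)) := by
    have hcoth := ((continuous_cosh.tendsto L).comp hB).div ((continuous_sinh.tendsto L).comp hB)
      (sinh_ne_zero.2 hL)
    have := ((continuous_cosh.tendsto 0).comp hhalf').mul hcoth |>.add
      (((continuous_sinh.tendsto 0).comp hhalf').const_mul b)
    simpa using this
  have hlim := hnum.div hden (div_ne_zero (cosh_pos L).ne' (sinh_ne_zero.2 hL))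
  rw [div_div_eq_mul_div, mul_div_assoc, ← tanh_eq_sinh_div_cosh] at hlim
  refine hlim.congr' ((hη0.mono fun i hi => ?_))
  have hs : sinh (η i / 2) ≠ 0 := by rw [Ne, sinh_eq_zero]; positivity
  simp only [Pi.div_apply]
  field_simp
/-- Continuum limit of the discrete stability thresholds: fix `ν > 0` and
`ζ ∈ (0,1)`; for each `n` let `η(n) > 0` solve `cosh η = 1 + 1/(2n²ν²)` and
set `ξ(n) = ⌊ζn⌋`. Then `n·η(n) → 1/ν` and both
`d₁(ξ(n)) = 1 + 2(ξ-1)/(coth(η/2)coth((n-ξ+1)η) + 1)` and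
`d₂(ξ(n)) = 1 + 2ξ/(coth(η/2)coth((n-ξ+1)η) - 1)` converge to the continuum
value `d(ζ) = 1 + (ζ/ν)tanh((1-ζ)/ν)`. Here `coth x = cosh x / sinh x`. -/
theorem stmt_18 (ν : ℝ) (hν : 0 < ν) (ζ : ℝ) (hζ : ζ ∈ Set.Ioo (0:ℝ) 1)
    (η : ℕ → ℝ) (hη : ∀ n : ℕ, 1 ≤ n → 0 < η n ∧
      Real.cosh (η n) = 1 + 1 / (2 * (n : ℝ) ^ 2 * ν ^ 2))
    (ξ : ℕ → ℕ) (hξ : ∀ n : ℕ, ξ n = ⌊ζ * (n : ℝ)⌋₊) :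
    Tendsto (fun n : ℕ => (n : ℝ) * η n) atTop (nhds (1 / ν)) ∧
    Tendsto (fun n : ℕ =>
        1 + 2 * ((ξ n : ℝ) - 1) /
          ((Real.cosh (η n / 2) / Real.sinh (η n / 2)) *
            (Real.cosh (((n : ℝ) - (ξ n : ℝ) + 1) * η n) /
              Real.sinh (((n : ℝ) - (ξ n : ℝ) + 1) * η n)) + 1)) atTop
      (nhds (1 + ζ / ν * Real.tanh ((1 - ζ) / ν))) ∧
    Tendsto (fun n : ℕ =>
        1 + 2 * (ξ n : ℝ) /
          ((Real.cosh (η n / 2) / Real.sinh (η n / 2)) *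
            (Real.cosh (((n : ℝ) - (ξ n : ℝ) + 1) * η n) /
              Real.sinh (((n : ℝ) - (ξ n : ℝ) + 1) * η n)) - 1)) atTop
      (nhds (1 + ζ / ν * Real.tanh ((1 - ζ) / ν))) := by
  obtain ⟨hζ0, hζ1⟩ := hζ
  have hsinh : ∀ᶠ n in atTop, 0 < η n ∧ sinh (η n / 2) = 1 / (2 * ν) / n := by
    filter_upwards [eventually_ge_atTop 1] with n hn
    obtain ⟨hpos, hcosh⟩ := hη n hn
    refine ⟨hpos, sinh_half_eq_of_cosh_eq hpos.le (by positivity) ?_⟩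
    rw [hcosh]
    field_simp
  have hnη : Tendsto (fun n : ℕ => (n : ℝ) * η n) atTop (𝓝 (1 / ν)) := by
    convert tendsto_natCast_mul_of_sinh_half_eq hsinh using 2
    field_simp
  have hξζ : Tendsto (fun n : ℕ => (ξ n : ℝ) / n) atTop (𝓝 ζ) := by
    simpa only [hξ, Function.comp_def] using
      (tendsto_nat_floor_mul_div_atTop hζ0.le).comp tendsto_natCast_atTop_atTop
  have hlim (a b : ℝ) := tendsto_two_mul_div_coth_mul_coth_add a b tendsto_natCast_atTop_atTop
    hξζ hnη (hsinh.mono fun _ h => h.1) (mul_ne_zero (by linarith) (by positivity))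
  rw [← mul_one_div ζ, ← mul_one_div (1 - ζ)]
  refine ⟨hnη, ?_, ?_⟩
  · simpa only [sub_eq_add_neg] using (hlim (-1) 1).const_add 1
  · simpa only [add_zero, sub_eq_add_neg] using (hlim 0 (-1)).const_add 1
end
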